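/- For every m ≥ 1 and every x_1, …, x_m ∈ ℝ^d: Σ_{k=1}^{m} x_kᵀ D_k^{−1} x_k ≤ ln det( (1/b) D_m ) + c^{−1} Σ_{k=1}^{m} Tr(D_{k−1}). -/

import Mathlib

/-
Each step `D_{k-1} ↦ D_k` contributes two estimates. The matrix determinant lemma gives
`x_kᵀ D_k⁻¹ x_k = 1 - det A / det D_k` with `A = (D_{k-1}⁻¹ + c⁻¹ I)⁻¹`, which is at most
`ln det D_k - ln det A` since `1 - t ≤ -ln t`. And `det A = det D_{k-1} / det (I + c⁻¹ D_{k-1})`,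
where `ln det (I + c⁻¹ D_{k-1}) ≤ c⁻¹ Tr D_{k-1}` by `ln λ ≤ λ - 1` on the eigenvalues.
Summing, the log-determinants telescope, and `det (b⁻¹ D_0) = (c/(c-b))^d ≥ 1`.
-/

set_option autoImplicit false

open Matrix Finset

noncomputable section

/-- `D_0 = (bc/(c-b)) I`, `D_k = (D_{k-1}⁻¹ + c⁻¹ I)⁻¹ + x_k x_kᵀ` for `k ≥ 1`. -/
def lasecD (d : ℕ) (b c : ℝ) (x : ℕ → Fin d → ℝ) : ℕ → Matrix (Fin d) (Fin d) ℝ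
  | 0 => (b * c / (c - b)) • (1 : Matrix (Fin d) (Fin d) ℝ)
  | k + 1 => ((lasecD d b c x k)⁻¹ + c⁻¹ • (1 : Matrix (Fin d) (Fin d) ℝ))⁻¹
      + vecMulVec (x (k + 1)) (x (k + 1))

namespace Matrix

variable {n : Type*} [Fintype n] [DecidableEq n]

theorem dotProduct_inv_add_vecMulVec_mulVec {K : Type*} [Field K] (A : Matrix n n K)
    (v : n → K) (hE : (A + vecMulVec v v).det ≠ 0) :
    v ⬝ᵥ ((A + vecMulVec v v)⁻¹ *ᵥ v) = 1 - A.det / (A + vecMulVec v v).det := by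
  set E := A + vecMulVec v v
  have hA : A = E + replicateCol Unit (-v) * replicateRow Unit v := by
    rw [← vecMulVec_eq, neg_vecMulVec, ← sub_eq_add_neg, add_sub_cancel_right]
  have hdet : A.det = E.det * (1 - v ⬝ᵥ (E⁻¹ *ᵥ v)) := by
    conv_lhs => rw [hA]
    rw [det_add_replicateCol_mul_replicateRow (isUnit_iff_ne_zero.2 hE), Matrix.mul_assoc,
      ← replicateCol_mulVec, det_unique (1 + _)]
    simp [replicateRow_mul_replicateCol_apply, sub_eq_add_neg, mulVec_neg]
  rw [hdet, mul_div_cancel_left₀ _ hE, sub_sub_cancel]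

namespace PosDef

theorem log_det_le_trace_sub_card {M : Matrix n n ℝ} (hM : M.PosDef) :
    Real.log M.det ≤ M.trace - Fintype.card n := by
  have hev := hM.eigenvalues_pos
  rw [hM.isHermitian.det_eq_prod_eigenvalues, hM.isHermitian.trace_eq_sum_eigenvalues]
  simp only [RCLike.ofReal_real_eq_id, id]
  rw [Real.log_prod fun i _ => (hev i).ne']
  calc ∑ i, Real.log (hM.isHermitian.eigenvalues i)
      ≤ ∑ i, (hM.isHermitian.eigenvalues i - 1) :=
        Finset.sum_le_sum fun i _ => Real.log_le_sub_one_of_pos (hev i)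
    _ = ∑ i, hM.isHermitian.eigenvalues i - Fintype.card n := by simp

theorem dotProduct_inv_add_vecMulVec_mulVec_le {A : Matrix n n ℝ} (hA : A.PosDef)
    (v : n → ℝ) :
    v ⬝ᵥ ((A + vecMulVec v v)⁻¹ *ᵥ v) ≤
      Real.log (A + vecMulVec v v).det - Real.log A.det := by
  have hE : 0 < (A + vecMulVec v v).det := by
    simpa using (hA.add_posSemidef (posSemidef_vecMulVec_self_star v)).det_pos
  have ht := Real.log_le_sub_one_of_pos (div_pos hA.det_pos hE)
  rw [Real.log_div hA.det_pos.ne' hE.ne'] at ht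
  rw [dotProduct_inv_add_vecMulVec_mulVec A v hE.ne']
  linarith

theorem inv_add_smul_one_inv {D : Matrix n n ℝ} (hD : D.PosDef) {r : ℝ} (hr : 0 ≤ r) :
    (D⁻¹ + r • 1)⁻¹.PosDef :=
  (hD.inv.add_posSemidef (PosSemidef.one.smul hr)).inv

theorem log_det_le_log_det_inv_add_smul_one {D : Matrix n n ℝ} (hD : D.PosDef) {r : ℝ}
    (hr : 0 ≤ r) :
    Real.log D.det ≤ Real.log (D⁻¹ + r • 1)⁻¹.det + r * D.trace := by
  have hDu : IsUnit D.det := isUnit_iff_ne_zero.2 hD.det_pos.ne'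
  have hC : (1 + r • D).PosDef := PosDef.one.add_posSemidef (hD.posSemidef.smul hr)
  have hfactor : D⁻¹ + r • (1 : Matrix n n ℝ) = D⁻¹ * (1 + r • D) := by
    rw [Matrix.mul_add, Matrix.mul_one, Matrix.mul_smul, nonsing_inv_mul _ hDu]
  have hlog : Real.log (D⁻¹ + r • 1)⁻¹.det = Real.log D.det - Real.log (1 + r • D).det := by
    rw [det_nonsing_inv, hfactor, det_mul, det_nonsing_inv, Ring.inverse_eq_inv', mul_inv,
      inv_inv, ← div_eq_mul_inv, Real.log_div hD.det_pos.ne' hC.det_pos.ne']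
  have htrace : (1 + r • D).trace = Fintype.card n + r * D.trace := by
    simp [trace_add, trace_smul]
  have hlogC := hC.log_det_le_trace_sub_card
  linarith

end PosDef

end Matrix

section lasecD

variable {d : ℕ} {b c : ℝ} (x : ℕ → Fin d → ℝ)

theorem lasecD_posDef (hb : 0 < b) (hbc : b < c) (k : ℕ) : (lasecD d b c x k).PosDef := by
  have hc : 0 < c := hb.trans hbc
  induction k with
  | zero => exact PosDef.one.smul (div_pos (mul_pos hb hc) (sub_pos.2 hbc))
  | succ k ih =>
    exact (ih.inv_add_smul_one_inv (inv_nonneg.2 hc.le)).add_posSemidef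
      (posSemidef_vecMulVec_self_star _)

theorem dotProduct_lasecD_inv_mulVec_le (hb : 0 < b) (hbc : b < c) (k : ℕ) :
    x (k + 1) ⬝ᵥ ((lasecD d b c x (k + 1))⁻¹ *ᵥ x (k + 1)) ≤
      Real.log (lasecD d b c x (k + 1)).det - Real.log (lasecD d b c x k).det
        + c⁻¹ * (lasecD d b c x k).trace := by
  have hD := lasecD_posDef x hb hbc k
  have hc : 0 ≤ c⁻¹ := inv_nonneg.2 (hb.trans hbc).le
  have hquad := (hD.inv_add_smul_one_inv hc).dotProduct_inv_add_vecMulVec_mulVec_le (x (k + 1))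
  have hlog := hD.log_det_le_log_det_inv_add_smul_one hc
  simp only [lasecD]
  linarith

theorem sum_dotProduct_lasecD_inv_mulVec_le (hb : 0 < b) (hbc : b < c) (m : ℕ) :
    ∑ k ∈ Icc 1 m, x k ⬝ᵥ ((lasecD d b c x k)⁻¹ *ᵥ x k) ≤
      Real.log (lasecD d b c x m).det - Real.log (lasecD d b c x 0).det
        + c⁻¹ * ∑ k ∈ Icc 1 m, (lasecD d b c x (k - 1)).trace := by
  induction m with
  | zero => simp
  | succ m ih =>
    rw [sum_Icc_succ_top (by omega), sum_Icc_succ_top (by omega), Nat.add_sub_cancel, mul_add]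
    linarith [dotProduct_lasecD_inv_mulVec_le x hb hbc m]

theorem mul_log_le_log_det_lasecD_zero (hb : 0 < b) (hbc : b < c) :
    d * Real.log b ≤ Real.log (lasecD d b c x 0).det := by
  have hcb : 0 < c - b := sub_pos.2 hbc
  rw [lasecD, det_smul, det_one, mul_one, Fintype.card_fin, Real.log_pow]
  gcongr
  rw [le_div_iff₀ hcb]
  nlinarith

end lasecD

theorem lasec_logdet_bound_general (d : ℕ) (b c : ℝ) (hb : 0 < b) (hbc : b < c)
    (m : ℕ) (x : ℕ → Fin d → ℝ) :
    ∑ k ∈ Icc 1 m, x k ⬝ᵥ ((lasecD d b c x k)⁻¹ *ᵥ x k) ≤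
      Real.log ((b⁻¹ • lasecD d b c x m).det)
        + c⁻¹ * ∑ k ∈ Icc 1 m, (lasecD d b c x (k - 1)).trace := by
  have hDm := (lasecD_posDef x hb hbc m).det_pos
  rw [det_smul, Real.log_mul (by positivity) hDm.ne', Real.log_pow, Real.log_inv,
    Fintype.card_fin]
  linarith [sum_dotProduct_lasecD_inv_mulVec_le x hb hbc m,
    mul_log_le_log_det_lasecD_zero x hb hbc]

/-- `Σ_{k=1}^m x_kᵀ D_k⁻¹ x_k ≤ ln det((1/b) D_m) + c⁻¹ Σ_{k=1}^m Tr(D_{k-1})`. -/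
theorem lasec_logdet_bound (d : ℕ) (hd : 1 ≤ d) (b c : ℝ) (hb : 0 < b) (hbc : b < c)
    (m : ℕ) (hm : 1 ≤ m) (x : ℕ → Fin d → ℝ) :
    ∑ k ∈ Icc 1 m, x k ⬝ᵥ ((lasecD d b c x k)⁻¹ *ᵥ x k) ≤
      Real.log ((b⁻¹ • lasecD d b c x m).det)
        + c⁻¹ * ∑ k ∈ Icc 1 m, (lasecD d b c x (k - 1)).trace :=
  lasec_logdet_bound_general d b c hb hbc m x

end
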